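/- arXiv:1107.2841 — 2 statements merged into one kernel-verified Lean document; each statement's English description precedes it below -/
import Mathlib

section
/- Let d := δ + ∂_τ, where ∂_τ := id_C + τ. Then d∘d = 0 and d satisfies the Leibniz rule d(u·v) = d(u)·v + u·d(v) for all u, v ∈ C; moreover ker(d) is a unital 𝔽-subalgebra of C, im(d) is a two-sided ideal of the algebra ker(d), and the quotient algebra ker(d)/im(d) is isomorphic as an 𝔽-algebra to 𝔽 × 𝔽 (the ℤ/2ℤ-cohomology algebra of the two-point space S⁰), an isomorphism being induced by sending the class of a* + A* to (1,0) and the class of b* + A* to (0,1). -/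
set_option maxHeartbeats 1000000

open Matrix

noncomputable section

namespace Stmt5
abbrev 𝔽 : Type := ZMod 2

/-- The 4-dimensional `𝔽`-vector space `C` with basis `a*, b*, A*, B*`; an element
`a·a* + b·b* + A·A* + B·B*` is recorded by its coordinates `(a, b, A, B)`. -/
abbrev C : Type := 𝔽 × 𝔽 × 𝔽 × 𝔽

def astar : C := (1, 0, 0, 0)
def bstar : C := (0, 1, 0, 0)
def Astar : C := (0, 0, 1, 0)
def Bstar : C := (0, 0, 0, 1)

/-- The cup product on `C`: the bilinear extension of `a*·a* = a*`, `b*·b* = b*`,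
`a*·A* = A*`, `a*·B* = B*`, `A*·b* = A*`, `B*·b* = B*`, and all other products of
basis elements equal to `0`. -/
def cmul (u v : C) : C :=
  (u.1 * v.1, u.2.1 * v.2.1,
   u.1 * v.2.2.1 + u.2.2.1 * v.2.1,
   u.1 * v.2.2.2 + u.2.2.2 * v.2.1)

/-- The simplicial coboundary `δ`: the linear map with `δ(a*) = δ(b*) = A* + B*`
and `δ(A*) = δ(B*) = 0`. -/
def δC (u : C) : C := (0, 0, u.1 + u.2.1, u.1 + u.2.1)

/-- The involution `τ`: the linear map with `τ(a*) = a*`, `τ(b*) = b*`,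
`τ(A*) = B*`, `τ(B*) = A*`. -/
def τC (u : C) : C := (u.1, u.2.1, u.2.2.2, u.2.2.1)

/-- `d := δ + ∂_τ`, where `∂_τ = id + τ`. -/
def dC (u : C) : C := δC u + (u + τC u)

/-- The kernel of `d`. -/
def Kd : Set C := {u | dC u = 0}

/-- The image of `d`. -/
def Imd : Set C := {w | ∃ u : C, dC u = w}

/-- The map inducing the isomorphism `ker(d)/im(d) ≅ 𝔽 × 𝔽`: it sends the class
of `a* + A*` to `(1,0)` and the class of `b* + A*` to `(0,1)`, and kills `im(d)`. -/
def ψ (u : C) : 𝔽 × 𝔽 := (u.1, u.2.1)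

/-- With `d := δ + ∂_τ`, we have `d ∘ d = 0` and `d` satisfies the
Leibniz rule; moreover `ker(d)` is a unital `𝔽`-subalgebra of `C`, `im(d)` is a
two-sided ideal of `ker(d)`, and the quotient algebra `ker(d)/im(d)` is isomorphic
as an `𝔽`-algebra to `𝔽 × 𝔽`, an isomorphism being induced by sending the class of
`a* + A*` to `(1,0)` and the class of `b* + A*` to `(0,1)`.  (The isomorphism is
encoded by the linear map `ψ`, which is multiplicative and unital on `ker(d)`,
surjective, and whose kernel on `ker(d)` is exactly `im(d)`.) -/
theorem statement_5 :
    -- `d ∘ d = 0`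
    (∀ u : C, dC (dC u) = 0) ∧
    -- the Leibniz rule for `d`
    (∀ u v : C, dC (cmul u v) = cmul (dC u) v + cmul u (dC v)) ∧
    -- `ker d` is a unital subalgebra
    (astar + bstar ∈ Kd) ∧
    (∀ u ∈ Kd, ∀ v ∈ Kd, u + v ∈ Kd ∧ cmul u v ∈ Kd) ∧
    (∀ (c : 𝔽), ∀ u ∈ Kd, c • u ∈ Kd) ∧
    -- `im d` is a two-sided ideal of `ker d`
    (Imd ⊆ Kd) ∧
    (∀ w ∈ Imd, ∀ w' ∈ Imd, w + w' ∈ Imd) ∧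
    (∀ (c : 𝔽), ∀ w ∈ Imd, c • w ∈ Imd) ∧
    (∀ u ∈ Kd, ∀ w ∈ Imd, cmul u w ∈ Imd ∧ cmul w u ∈ Imd) ∧
    -- `ψ` induces the isomorphism `ker(d)/im(d) ≅ 𝔽 × 𝔽`
    (∀ u v : C, ψ (u + v) = ψ u + ψ v) ∧
    (∀ (c : 𝔽) (u : C), ψ (c • u) = c • ψ u) ∧
    (∀ u ∈ Kd, ∀ v ∈ Kd, ψ (cmul u v) = ψ u * ψ v) ∧
    (ψ (astar + bstar) = 1) ∧
    (astar + Astar ∈ Kd) ∧ (bstar + Astar ∈ Kd) ∧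
    (ψ (astar + Astar) = (1, 0)) ∧
    (ψ (bstar + Astar) = (0, 1)) ∧
    (∀ p : 𝔽 × 𝔽, ∃ u ∈ Kd, ψ u = p) ∧
    (∀ u ∈ Kd, (ψ u = 0 ↔ u ∈ Imd)) := by
  simp only [Kd, Imd, Set.subset_def, Set.mem_setOf_eq]
  refine ⟨by decide, by decide, by decide, by decide, by decide, by decide,
    ?_, by decide, by decide, by decide, by decide,
    ?_, by decide, by decide, by decide, by decide, by decide, by decide, by decide⟩
  · rintro w ⟨u, rfl⟩ w' ⟨u', rfl⟩
    refine ⟨u + u', ?_⟩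
    simp only [dC, δC, τC, Prod.ext_iff, Prod.fst_add, Prod.snd_add]
    constructor
    · ring
    constructor
    · ring
    constructor
    · ring
    · ring
  · intro u _ v _
    rfl

end Stmt5
end
end

section
/- Fix m ≥ 1 and 1 ≤ k ≤ m. In the B^{Kh}_m-bimodule P_k^{Kh} ⊗_𝔽 _kP^{Kh}, the element c := u*⊗u + v*⊗v satisfies b·c = c·b for every b ∈ B^{Kh}_m. Consequently the map γ_k^{Kh}: B^{Kh}_m → P_k^{Kh} ⊗_𝔽 _kP^{Kh} defined by γ_k^{Kh}(b) := b·c is a homomorphism of B^{Kh}_m-bimodules (i.e. γ_k^{Kh}(b₁·b·b₂) = b₁·γ_k^{Kh}(b)·b₂ for all b₁, b, b₂), and it satisfies γ_k^{Kh}(1_{kk}) = u*⊗u, γ_k^{Kh}(1_{k-1,k-1}) = v*⊗v, γ_k^{Kh}(1_{ii}) = 0 for i ∉ {k-1, k}, and γ_k^{Kh}(x_{k,k-1}) = u*⊗v. -/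
set_option maxHeartbeats 1000000

open Matrix

noncomputable section

namespace Stmt10
abbrev 𝔽 : Type := ZMod 2

/-- `𝔽[X]/(X²)`, modeled as the dual numbers over `𝔽 = ℤ/2ℤ`. -/
abbrev D : Type := DualNumber 𝔽

/-- The element `x + y·X` of `𝔽[X]/(X²)`. -/
def dn (x y : 𝔽) : D := TrivSqZeroExt.inl x + TrivSqZeroExt.inr y

abbrev MKh (m : ℕ) : Type := Matrix (Fin (m + 1)) (Fin (m + 1)) D
abbrev MHF (m : ℕ) : Type := Matrix (Fin (m + 1)) (Fin (m + 1)) (𝔽 × 𝔽)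

/-- `B^{Kh}_m`: lower triangular `(m+1)×(m+1)` matrices over `𝔽[X]/(X²)` whose
diagonal entries lie in `{0,1}`. -/
def BKh (m : ℕ) : Set (MKh m) :=
  {M | (∀ i j, i < j → M i j = 0) ∧ (∀ i, M i i = 0 ∨ M i i = 1)}

/-- `B^{HF}_m`: lower triangular `(m+1)×(m+1)` matrices over `𝔽 × 𝔽` whose
diagonal entries lie in `{(0,0),(1,1)}`. -/
def BHF (m : ℕ) : Set (MHF m) :=
  {M | (∀ i j, i < j → M i j = 0) ∧ (∀ i, M i i = 0 ∨ M i i = 1)}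

open Fin.NatCast in
/-- The index `k` as an element of `Fin (m+1)`. -/
def idx (m k : ℕ) : Fin (m + 1) := (k : Fin (m + 1))

/-- The left action of `B^{Kh}_m` on `P_k^{Kh}`; an element `α·u* + β·v*` is
recorded by its coordinates `(α, β)` in the basis `u*, v*`.  This is the unique
bilinear extension of the action table `1_{kk}·u* = u*`, `1_{k-1,k-1}·v* = v*`,
`x_{k,k-1}·v* = u*`, all other actions of pairs of basis elements being `0`. -/
def lActKh (m k : ℕ) (b : MKh m) (p : 𝔽 × 𝔽) : 𝔽 × 𝔽 :=
  ((b (idx m k) (idx m k)).fst * p.1 + (b (idx m k) (idx m (k - 1))).snd * p.2,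
   (b (idx m (k - 1)) (idx m (k - 1))).fst * p.2)

/-- The right action of `B^{Kh}_m` on `_kP^{Kh}`; an element `γ·u + δ·v` is
recorded by its coordinates `(γ, δ)` in the basis `u, v`.  This is the unique
bilinear extension of the action table `u·1_{kk} = u`, `u·x_{k,k-1} = v`,
`v·1_{k-1,k-1} = v`, all other actions of pairs of basis elements being `0`. -/
def rActKh (m k : ℕ) (q : 𝔽 × 𝔽) (a : MKh m) : 𝔽 × 𝔽 :=
  (q.1 * (a (idx m k) (idx m k)).fst,
   q.1 * (a (idx m k) (idx m (k - 1))).snd + q.2 * (a (idx m (k - 1)) (idx m (k - 1))).fst)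

/-- The left action of `B^{HF}_m` on `P_k^{HF}` (coordinates in the basis `u*, v*`):
the bilinear extension of `1_{kk}·u* = u*`, `1_{k-1,k-1}·v* = v*`,
`ρ_{k,k-1}·v* = σ_{k,k-1}·v* = u*`, all other actions of basis elements being `0`. -/
def lActHF (m k : ℕ) (b : MHF m) (p : 𝔽 × 𝔽) : 𝔽 × 𝔽 :=
  ((b (idx m k) (idx m k)).1 * p.1
      + ((b (idx m k) (idx m (k - 1))).1 + (b (idx m k) (idx m (k - 1))).2) * p.2,
   (b (idx m (k - 1)) (idx m (k - 1))).1 * p.2)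

/-- The right action of `B^{HF}_m` on `_kP^{HF}` (coordinates in the basis `u, v`):
the bilinear extension of `u·1_{kk} = u`, `u·ρ_{k,k-1} = u·σ_{k,k-1} = v`,
`v·1_{k-1,k-1} = v`, all other actions of basis elements being `0`. -/
def rActHF (m k : ℕ) (q : 𝔽 × 𝔽) (a : MHF m) : 𝔽 × 𝔽 :=
  (q.1 * (a (idx m k) (idx m k)).1,
   q.1 * ((a (idx m k) (idx m (k - 1))).1 + (a (idx m k) (idx m (k - 1))).2)
      + q.2 * (a (idx m (k - 1)) (idx m (k - 1))).1)

/-- The tensor product `P_k ⊗ _kP`: coordinates `(w₁, w₂, w₃, w₄)` in the basis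
`u*⊗u, u*⊗v, v*⊗u, v*⊗v`. -/
abbrev T4 : Type := 𝔽 × 𝔽 × 𝔽 × 𝔽

/-- Left action of `B^{Kh}_m` on `P_k^{Kh} ⊗ _kP^{Kh}`, via `b·(p⊗q) = (b·p)⊗q`. -/
def lActKhT (m k : ℕ) (b : MKh m) (w : T4) : T4 :=
  ((b (idx m k) (idx m k)).fst * w.1 + (b (idx m k) (idx m (k - 1))).snd * w.2.2.1,
   (b (idx m k) (idx m k)).fst * w.2.1 + (b (idx m k) (idx m (k - 1))).snd * w.2.2.2,
   (b (idx m (k - 1)) (idx m (k - 1))).fst * w.2.2.1,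
   (b (idx m (k - 1)) (idx m (k - 1))).fst * w.2.2.2)

/-- Right action of `B^{Kh}_m` on `P_k^{Kh} ⊗ _kP^{Kh}`, via `(p⊗q)·b = p⊗(q·b)`. -/
def rActKhT (m k : ℕ) (w : T4) (a : MKh m) : T4 :=
  (w.1 * (a (idx m k) (idx m k)).fst,
   w.1 * (a (idx m k) (idx m (k - 1))).snd + w.2.1 * (a (idx m (k - 1)) (idx m (k - 1))).fst,
   w.2.2.1 * (a (idx m k) (idx m k)).fst,
   w.2.2.1 * (a (idx m k) (idx m (k - 1))).snd + w.2.2.2 * (a (idx m (k - 1)) (idx m (k - 1))).fst)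

/-- Left action of `B^{HF}_m` on `P_k^{HF} ⊗ _kP^{HF}`. -/
def lActHFT (m k : ℕ) (b : MHF m) (w : T4) : T4 :=
  ((b (idx m k) (idx m k)).1 * w.1
      + ((b (idx m k) (idx m (k - 1))).1 + (b (idx m k) (idx m (k - 1))).2) * w.2.2.1,
   (b (idx m k) (idx m k)).1 * w.2.1
      + ((b (idx m k) (idx m (k - 1))).1 + (b (idx m k) (idx m (k - 1))).2) * w.2.2.2,
   (b (idx m (k - 1)) (idx m (k - 1))).1 * w.2.2.1,
   (b (idx m (k - 1)) (idx m (k - 1))).1 * w.2.2.2)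

/-- Right action of `B^{HF}_m` on `P_k^{HF} ⊗ _kP^{HF}`. -/
def rActHFT (m k : ℕ) (w : T4) (a : MHF m) : T4 :=
  (w.1 * (a (idx m k) (idx m k)).1,
   w.1 * ((a (idx m k) (idx m (k - 1))).1 + (a (idx m k) (idx m (k - 1))).2)
      + w.2.1 * (a (idx m (k - 1)) (idx m (k - 1))).1,
   w.2.2.1 * (a (idx m k) (idx m k)).1,
   w.2.2.1 * ((a (idx m k) (idx m (k - 1))).1 + (a (idx m k) (idx m (k - 1))).2)
      + w.2.2.2 * (a (idx m (k - 1)) (idx m (k - 1))).1)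

/-- `γ_k^{Kh} : B^{Kh}_m → P_k^{Kh} ⊗ _kP^{Kh}`, `b ↦ b·(u*⊗u + v*⊗v)`. -/
def γKh (m k : ℕ) (b : MKh m) : T4 := lActKhT m k b (1, 0, 0, 1)

/-- `γ_k^{HF} : B^{HF}_m → P_k^{HF} ⊗ _kP^{HF}`, `b ↦ b·(u*⊗u + v*⊗v)`. -/
def γHF (m k : ℕ) (b : MHF m) : T4 := lActHFT m k b (1, 0, 0, 1)

/-- `(β_k^{Kh})_{(1|1|0)} : B^{Kh}_m ⊗ (P_k^{Kh} ⊗ _kP^{Kh}) → B^{Kh}_m`: the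
bilinear map given on pairs of basis elements by `(1_{ik}, u*⊗u) ↦ x_{ik}` (`i ≥ k+1`),
`(1_{i,k-1}, v*⊗u) ↦ 1_{ik}` (`i ≥ k`), `(x_{i,k-1}, v*⊗u) ↦ x_{ik}` (`i ≥ k+1`),
`(1_{i,k-1}, v*⊗v) ↦ x_{i,k-1}` (`i ≥ k`), all other values being `0`. -/
def βKh1 (m k : ℕ) (b : MKh m) (w : T4) : MKh m :=
  (∑ i : Fin (m + 1), if k < (i : ℕ) then
      single i (idx m k)
        (dn ((b i (idx m (k - 1))).fst * w.2.2.1)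
            ((b i (idx m k)).fst * w.1 + (b i (idx m (k - 1))).snd * w.2.2.1)) else 0)
  + single (idx m k) (idx m k) (dn ((b (idx m k) (idx m (k - 1))).fst * w.2.2.1) 0)
  + ∑ i : Fin (m + 1), if k ≤ (i : ℕ) then
      single i (idx m (k - 1)) (dn 0 ((b i (idx m (k - 1))).fst * w.2.2.2)) else 0

/-- `(β_k^{Kh})_{(0|1|1)} : (P_k^{Kh} ⊗ _kP^{Kh}) ⊗ B^{Kh}_m → B^{Kh}_m`: the
bilinear map given on pairs of basis elements by `(u*⊗u, 1_{kj}) ↦ x_{kj}` (`j ≤ k-1`),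
`(v*⊗u, 1_{kj}) ↦ 1_{k-1,j}` (`j ≤ k-1`), `(v*⊗u, x_{kj}) ↦ x_{k-1,j}` (`j ≤ k-2`),
`(v*⊗v, 1_{k-1,j}) ↦ x_{k-1,j}` (`j ≤ k-2`), all other values being `0`. -/
def βKh2 (m k : ℕ) (w : T4) (a : MKh m) : MKh m :=
  (∑ j : Fin (m + 1), if (j : ℕ) < k then
      single (idx m k) j (dn 0 (w.1 * (a (idx m k) j).fst)) else 0)
  + (∑ j : Fin (m + 1), if (j : ℕ) < k then
      single (idx m (k - 1)) j (dn (w.2.2.1 * (a (idx m k) j).fst) 0) else 0)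
  + ∑ j : Fin (m + 1), if (j : ℕ) < k - 1 then
      single (idx m (k - 1)) j
        (dn 0 (w.2.2.1 * (a (idx m k) j).snd + w.2.2.2 * (a (idx m (k - 1)) j).fst)) else 0

/-- `(β_k^{HF})_{(1|1|0)} : B^{HF}_m ⊗ (P_k^{HF} ⊗ _kP^{HF}) → B^{HF}_m`: the
bilinear map given on pairs of basis elements by `(ρ_{ik}, u*⊗u) ↦ ρ_{ik}` (`i ≥ k+1`),
`(σ_{k,k-1}, v*⊗u) ↦ 1_{kk}`, `(ρ_{i,k-1}, v*⊗u) ↦ ρ_{ik}` (`i ≥ k+1`),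
`(σ_{i,k-1}, v*⊗u) ↦ σ_{ik}` (`i ≥ k+1`), `(ρ_{i,k-1}, v*⊗v) ↦ ρ_{i,k-1}` (`i ≥ k`),
all other values being `0`. -/
def βHF1 (m k : ℕ) (b : MHF m) (w : T4) : MHF m :=
  (∑ i : Fin (m + 1), if k < (i : ℕ) then
      single i (idx m k)
        ((b i (idx m k)).1 * w.1 + (b i (idx m (k - 1))).1 * w.2.2.1,
         (b i (idx m (k - 1))).2 * w.2.2.1) else 0)
  + single (idx m k) (idx m k)
      ((b (idx m k) (idx m (k - 1))).2 * w.2.2.1, (b (idx m k) (idx m (k - 1))).2 * w.2.2.1)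
  + ∑ i : Fin (m + 1), if k ≤ (i : ℕ) then
      single i (idx m (k - 1)) ((b i (idx m (k - 1))).1 * w.2.2.2, 0) else 0

/-- `(β_k^{HF})_{(0|1|1)} : (P_k^{HF} ⊗ _kP^{HF}) ⊗ B^{HF}_m → B^{HF}_m`: the
bilinear map given on pairs of basis elements by `(u*⊗u, ρ_{kj}) ↦ ρ_{kj}` (`j ≤ k-1`),
`(v*⊗u, σ_{k,k-1}) ↦ 1_{k-1,k-1}`, `(v*⊗u, ρ_{kj}) ↦ ρ_{k-1,j}` (`j ≤ k-2`),
`(v*⊗u, σ_{kj}) ↦ σ_{k-1,j}` (`j ≤ k-2`), `(v*⊗v, ρ_{k-1,j}) ↦ ρ_{k-1,j}` (`j ≤ k-2`),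
all other values being `0`. -/
def βHF2 (m k : ℕ) (w : T4) (a : MHF m) : MHF m :=
  (∑ j : Fin (m + 1), if (j : ℕ) < k then
      single (idx m k) j (w.1 * (a (idx m k) j).1, 0) else 0)
  + single (idx m (k - 1)) (idx m (k - 1))
      (w.2.2.1 * (a (idx m k) (idx m (k - 1))).2, w.2.2.1 * (a (idx m k) (idx m (k - 1))).2)
  + ∑ j : Fin (m + 1), if (j : ℕ) < k - 1 then
      single (idx m (k - 1)) j
        (w.2.2.1 * (a (idx m k) j).1 + w.2.2.2 * (a (idx m (k - 1)) j).1,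
         w.2.2.1 * (a (idx m k) j).2) else 0

/-- The left action on the mapping cone `(P_k^{Kh} ⊗ _kP^{Kh}) ⊕ B^{Kh}_m`,
`a·(w, b) := (a·w, β₁(a,w) + a·b)`. -/
def coneLKh (m k : ℕ) (a : MKh m) (p : T4 × MKh m) : T4 × MKh m :=
  (lActKhT m k a p.1, βKh1 m k a p.1 + a * p.2)

/-- The right action on the mapping cone, `(w, b)·a := (w·a, β₂(w,a) + b·a)`. -/
def coneRKh (m k : ℕ) (p : T4 × MKh m) (a : MKh m) : T4 × MKh m :=
  (rActKhT m k p.1 a, βKh2 m k p.1 a + p.2 * a)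

def coneLHF (m k : ℕ) (a : MHF m) (p : T4 × MHF m) : T4 × MHF m :=
  (lActHFT m k a p.1, βHF1 m k a p.1 + a * p.2)

def coneRHF (m k : ℕ) (p : T4 × MHF m) (a : MHF m) : T4 × MHF m :=
  (rActHFT m k p.1 a, βHF2 m k p.1 a + p.2 * a)

/-- The degree-0 identification `ℱ₀(B^{HF}_m) ≅ (degree-0 part of B^{Kh}_m)`,
sending `1_{ii}, 1_{ij} = ρ_{ij} + σ_{ij}` to `1_{ii}, 1_{ij}`: on matrix entries,
`(c, c) ↦ c`. -/
def σ0 (m : ℕ) (M : MHF m) : MKh m := Matrix.of fun i j => dn ((M i j).1) 0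

/-- The degree-1 identification `ℱ₁/ℱ₀(B^{HF}_m) ≅ (degree-1 part of B^{Kh}_m)`,
sending the class `[ρ_{ij}]` to `x_{ij}`: on matrix entries, `(r, s) ↦ (r+s)·X`
(which kills `ℱ₀` and sends `ρ_{ij}`, and any representative of `[ρ_{ij}]`, to `x_{ij}`). -/
def σ1 (m : ℕ) (M : MHF m) : MKh m := Matrix.of fun i j => dn 0 ((M i j).1 + (M i j).2)

/-- `ℱ₀(B^{HF}_m)`: the 𝔽-span of the `1_{ii}` and the `1_{ij} = ρ_{ij} + σ_{ij}`,
i.e. lower triangular matrices all of whose entries lie in `𝔽·(1,1)`. -/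
def F0HF (m : ℕ) : Set (MHF m) :=
  {M | (∀ i j, i < j → M i j = 0) ∧ ∀ i j, (M i j).1 = (M i j).2}

/-- The filtration `ℱ_{-1} = 0 ⊆ ℱ₀ ⊆ ℱ₁ = B^{HF}_m` (with `ℱ_n = B^{HF}_m` for
`n ≥ 1` and `ℱ_n = 0` for `n ≤ -1`). -/
def FiltB (m : ℕ) : ℤ → Set (MHF m) := fun n =>
  if n < 0 then {0} else if n = 0 then F0HF m else BHF m

/-- The filtration on `P_k^{HF} ⊗ _kP^{HF}`:
`ℱ₀ = 𝔽·(v*⊗u) ⊆ ℱ₁ = span{v*⊗u, v*⊗v, u*⊗u} ⊆ ℱ₂ = everything`. -/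
def FiltT : ℤ → Set T4 := fun n =>
  if n < 0 then {0}
  else if n = 0 then {w | w.1 = 0 ∧ w.2.1 = 0 ∧ w.2.2.2 = 0}
  else if n = 1 then {w | w.2.1 = 0}
  else Set.univ

/-- The identification of `ℱ₁/ℱ₀(P_k^{HF} ⊗ _kP^{HF})` with the degree-1 part
`span{u*⊗u, v*⊗v}` of `P_k^{Kh} ⊗ _kP^{Kh}`: the class of `w` is recorded by its
`u*⊗u` and `v*⊗v` coordinates. -/
def θ1 (w : T4) : T4 := (w.1, 0, 0, w.2.2.2)

end Stmt10

/-! The actions of `b` on `P_k^{Kh} ⊗ _kP^{Kh}` only involve the entries of `b` at `(k,k)`,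
`(k,k-1)` and `(k-1,k-1)`. Since `k-1 ⋖ k`, these entries of a product of lower triangular
matrices are computed from the same entries of the factors, and because diagonal entries of
elements of `B^{Kh}_m` have no `X`-part, `γ(MN) = M·γ(N) = γ(M)·N` is a direct computation in
`𝔽[X]/(X²)`. -/

namespace Matrix.IsLowerTriangular

variable {n R : Type*} [Fintype n] [LinearOrder n] [NonUnitalNonAssocSemiring R]
  {M N : Matrix n n R}

theorem mul_apply_self (hM : M.IsLowerTriangular) (hN : N.IsLowerTriangular) (i : n) :
    (M * N) i i = M i i * N i i := by
  rw [mul_apply]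
  refine Finset.sum_eq_single i (fun p _ hp => ?_) (by simp)
  rcases lt_or_gt_of_ne hp with h | h
  · rw [hN h, mul_zero]
  · rw [hM h, zero_mul]

theorem mul_apply_of_covBy (hM : M.IsLowerTriangular) (hN : N.IsLowerTriangular) {i j : n}
    (hji : j ⋖ i) : (M * N) i j = M i j * N j j + M i i * N i j := by
  classical
  rw [mul_apply, ← Finset.sum_subset (Finset.subset_univ {j, i}), Finset.sum_pair hji.ne]
  intro p _ hp
  simp only [Finset.mem_insert, Finset.mem_singleton, not_or] at hp
  rcases lt_or_gt_of_ne hp.2 with hpi | hip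
  · have hpj : p < j := lt_of_le_of_ne (not_lt.mp fun h => hji.2 h hpi) hp.1
    rw [hN hpj, mul_zero]
  · rw [hM hip, zero_mul]

end Matrix.IsLowerTriangular

namespace Stmt10

section

variable {m k : ℕ}

theorem isLowerTriangular_of_mem_BKh {b : MKh m} (hb : b ∈ BKh m) : b.IsLowerTriangular :=
  fun i j hij => hb.1 i j hij

theorem snd_apply_self_of_mem_BKh {b : MKh m} (hb : b ∈ BKh m) (i : Fin (m + 1)) :
    (b i i).snd = 0 := by
  rcases hb.2 i with h | h <;> simp [h]

theorem mul_mem_BKh {b₁ b₂ : MKh m} (hb₁ : b₁ ∈ BKh m) (hb₂ : b₂ ∈ BKh m) :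
    b₁ * b₂ ∈ BKh m := by
  have h₁ := isLowerTriangular_of_mem_BKh hb₁
  have h₂ := isLowerTriangular_of_mem_BKh hb₂
  refine ⟨fun i j hij => (h₁.mul h₂) hij, fun i => ?_⟩
  rw [h₁.mul_apply_self h₂]
  rcases hb₁.2 i with h | h <;> simp [h, hb₂.2 i]

theorem val_idx (hk : k ≤ m) : (idx m k : ℕ) = k :=
  Fin.val_cast_of_lt (Nat.lt_succ_of_le hk)

theorem idx_pred_covBy_idx (hk1 : 1 ≤ k) (hk2 : k ≤ m) : idx m (k - 1) ⋖ idx m k := by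
  rw [Fin.covBy_iff, val_idx hk2, val_idx (by omega), Nat.covBy_iff_add_one_eq]
  omega

theorem γKh_apply (b : MKh m) :
    γKh m k b = ((b (idx m k) (idx m k)).fst, (b (idx m k) (idx m (k - 1))).snd, 0,
      (b (idx m (k - 1)) (idx m (k - 1))).fst) := by
  simp [γKh, lActKhT]

theorem lActKhT_γKh (M N : MKh m) :
    lActKhT m k M (γKh m k N) = rActKhT m k (γKh m k M) N := by
  simp only [γKh_apply, lActKhT, rActKhT, Prod.mk.injEq]
  exact ⟨by ring, trivial, by ring, by ring⟩

theorem γKh_mul (hk1 : 1 ≤ k) (hk2 : k ≤ m) {M N : MKh m} (hM : M ∈ BKh m) (hN : N ∈ BKh m) :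
    γKh m k (M * N) = lActKhT m k M (γKh m k N) := by
  have hMl := isLowerTriangular_of_mem_BKh hM
  have hNl := isLowerTriangular_of_mem_BKh hN
  simp only [γKh_apply, lActKhT, hMl.mul_apply_self hNl,
    hMl.mul_apply_of_covBy hNl (idx_pred_covBy_idx hk1 hk2), TrivSqZeroExt.fst_mul,
    TrivSqZeroExt.snd_mul, TrivSqZeroExt.snd_add, smul_eq_mul, MulOpposite.smul_eq_mul_unop,
    MulOpposite.unop_op, snd_apply_self_of_mem_BKh hM, snd_apply_self_of_mem_BKh hN,
    Prod.mk.injEq]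
  exact ⟨by ring, by ring, by ring, trivial⟩

end

theorem statement_10_general (m k : ℕ) (hk1 : 1 ≤ k) (hk2 : k ≤ m) :
    (∀ b ∈ BKh m, lActKhT m k b (1, 0, 0, 1) = rActKhT m k (1, 0, 0, 1) b) ∧
    (∀ b₁ ∈ BKh m, ∀ b ∈ BKh m, ∀ b₂ ∈ BKh m,
        γKh m k (b₁ * b * b₂) = rActKhT m k (lActKhT m k b₁ (γKh m k b)) b₂) ∧
    γKh m k (single (idx m k) (idx m k) 1) = (1, 0, 0, 0) ∧
    γKh m k (single (idx m (k - 1)) (idx m (k - 1)) 1) = (0, 0, 0, 1) ∧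
    (∀ i : Fin (m + 1), (i : ℕ) ≠ k - 1 → (i : ℕ) ≠ k →
        γKh m k (single i i 1) = 0) ∧
    γKh m k (single (idx m k) (idx m (k - 1)) (dn 0 1)) = (0, 1, 0, 0) := by
  have hJK : idx m (k - 1) ≠ idx m k := (idx_pred_covBy_idx hk1 hk2).ne
  refine ⟨fun b _ => by simp [lActKhT, rActKhT, mul_comm], ?_, ?_, ?_, ?_, ?_⟩
  · intro b₁ hb₁ b hb b₂ hb₂
    rw [γKh_mul hk1 hk2 (mul_mem_BKh hb₁ hb) hb₂, lActKhT_γKh, γKh_mul hk1 hk2 hb₁ hb]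
  · simp [γKh_apply, hJK.symm]
  · simp [γKh_apply, hJK]
  · intro i hiJ hiK
    have hiK' : i ≠ idx m k := fun h => hiK (h ▸ val_idx hk2)
    have hiJ' : i ≠ idx m (k - 1) := fun h => hiJ (h ▸ val_idx (by omega))
    simp [γKh_apply, hiK', hiJ', Prod.ext_iff]
  · simp [γKh_apply, hJK, hJK.symm, dn]

/-- In the `B^{Kh}_m`-bimodule `P_k^{Kh} ⊗ _kP^{Kh}` the element
`c = u*⊗u + v*⊗v` (coordinates `(1,0,0,1)`) is central: `b·c = c·b` for every
`b ∈ B^{Kh}_m`.  Consequently `γ_k^{Kh}(b) := b·c` is a homomorphism of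
`B^{Kh}_m`-bimodules, and it takes the stated values on basis elements. -/
theorem statement_10 (m k : ℕ) (hm : 1 ≤ m) (hk1 : 1 ≤ k) (hk2 : k ≤ m) :
    (∀ b ∈ BKh m, lActKhT m k b (1, 0, 0, 1) = rActKhT m k (1, 0, 0, 1) b) ∧
    (∀ b₁ ∈ BKh m, ∀ b ∈ BKh m, ∀ b₂ ∈ BKh m,
        γKh m k (b₁ * b * b₂) = rActKhT m k (lActKhT m k b₁ (γKh m k b)) b₂) ∧
    γKh m k (single (idx m k) (idx m k) 1) = (1, 0, 0, 0) ∧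
    γKh m k (single (idx m (k - 1)) (idx m (k - 1)) 1) = (0, 0, 0, 1) ∧
    (∀ i : Fin (m + 1), (i : ℕ) ≠ k - 1 → (i : ℕ) ≠ k →
        γKh m k (single i i 1) = 0) ∧
    γKh m k (single (idx m k) (idx m (k - 1)) (dn 0 1)) = (0, 1, 0, 0) :=
  statement_10_general m k hk1 hk2

end Stmt10
end
end
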